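/- Let G and H be finite simple graphs, n ≥ 2 an integer with χ(Δ_n(G)) = χ(G) + 1 > χ(H), and let h: V(H) → ℕ⁺ satisfy h(v) ≤ n for some v ∈ V(H) and h(u) > 1 for all u ∈ V(H). Then χ(Δ_{H,h}(G)) = χ(Δ_n(G)) = χ(G) + 1, where χ denotes the (ordinary) chromatic number. -/

import Mathlib

open Finset

/-- A set of vertices of a graph is independent if it contains no edge. -/
def IsIndep {V : Type*} (G : SimpleGraph V) (s : Set V) : Prop :=
  ∀ a ∈ s, ∀ b ∈ s, ¬ G.Adj a b

/-- The fractional chromatic number of a finite graph: the infimum of the weights of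
fractional colourings, where a fractional colouring assigns a value in `[0,1]` to each
independent set so that every vertex receives total value at least `1`. -/
noncomputable def fracChi {V : Type*} [Fintype V] (G : SimpleGraph V) : ℝ := by
  classical
  exact sInf { w : ℝ | ∃ f : Finset V → ℝ,
    (∀ I, 0 ≤ f I) ∧ (∀ I, f I ≤ 1) ∧
    (∀ I : Finset V, ¬ IsIndep G ↑I → f I = 0) ∧
    (∀ v : V, 1 ≤ ∑ I : Finset V, (if v ∈ I then f I else 0)) ∧
    w = ∑ I : Finset V, f I }

/-- Adjacency for the `n`-th cone over `G`.  The vertex `none` is the apex `⋆`, and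
`some (x, i)` is the vertex `(x, i)` in layer `i ∈ {0, …, n-1}`. -/
def coneAdj {V : Type*} (G : SimpleGraph V) (n : ℕ) :
    Option (V × Fin n) → Option (V × Fin n) → Prop
  | some (x, i), some (y, j) =>
      G.Adj x y ∧ ((i : ℕ) + 1 = (j : ℕ) ∨ (j : ℕ) + 1 = (i : ℕ) ∨ ((i : ℕ) = 0 ∧ (j : ℕ) = 0))
  | some (_, i), none => (i : ℕ) = n - 1
  | none, some (_, j) => (j : ℕ) = n - 1
  | none, none => False

/-- The `n`-th cone `Δ_n(G)` over `G`. -/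
def coneGraph {V : Type*} (G : SimpleGraph V) (n : ℕ) : SimpleGraph (Option (V × Fin n)) where
  Adj := coneAdj G n
  symm := by
    constructor
    rintro (_ | ⟨x, i⟩) (_ | ⟨y, j⟩) hadj <;> simp only [coneAdj] at hadj ⊢ <;>
      first
        | exact hadj
        | exact ⟨hadj.1.symm, by tauto⟩
  loopless := by
    constructor
    rintro (_ | ⟨x, i⟩) hadj <;> simp only [coneAdj] at hadj <;>
      first
        | exact hadj
        | exact G.irrefl hadj.1

/-- Vertices of the `(H,h)`-cone over `G`: base vertices `(x,0)` (the left summand `V`),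
inner vertices `((x,i),v)` with `1 ≤ i ≤ h v - 1` (encoded as `⟨v, x, i-1⟩` with
`i - 1 : Fin (h v - 1)`), and apex vertices `(⋆, v)` (the right summand `W`). -/
abbrev HConeVert (V W : Type*) (h : W → ℕ) : Type _ :=
  V ⊕ (Σ w : W, V × Fin (h w - 1)) ⊕ W

/-- Adjacency for the `(H,h)`-cone over `G`. -/
def hConeAdj {V W : Type*} (G : SimpleGraph V) (H : SimpleGraph W) (h : W → ℕ) :
    HConeVert V W h → HConeVert V W h → Prop
  | .inl x, .inl y => G.Adj x y
  | .inl x, .inr (.inl ⟨_, y, i⟩) => G.Adj x y ∧ (i : ℕ) = 0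
  | .inr (.inl ⟨_, y, i⟩), .inl x => G.Adj x y ∧ (i : ℕ) = 0
  | .inl _, .inr (.inr w) => h w = 1
  | .inr (.inr w), .inl _ => h w = 1
  | .inr (.inl ⟨w, x, i⟩), .inr (.inl ⟨w', y, j⟩) =>
      w = w' ∧ G.Adj x y ∧ ((i : ℕ) + 1 = (j : ℕ) ∨ (j : ℕ) + 1 = (i : ℕ))
  | .inr (.inl ⟨w, _, i⟩), .inr (.inr w') => w = w' ∧ (i : ℕ) + 2 = h w
  | .inr (.inr w'), .inr (.inl ⟨w, _, i⟩) => w = w' ∧ (i : ℕ) + 2 = h w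
  | .inr (.inr w), .inr (.inr w') => H.Adj w w'

/-- The `(H,h)`-cone `Δ_{H,h}(G)` over `G`. -/
def hConeGraph {V W : Type*} (G : SimpleGraph V) (H : SimpleGraph W) (h : W → ℕ) :
    SimpleGraph (HConeVert V W h) where
  Adj := hConeAdj G H h
  symm := by
    constructor
    rintro (x | ⟨w, x, i⟩ | w) (y | ⟨w', y, j⟩ | w') hadj <;>
      simp only [hConeAdj] at hadj ⊢ <;>
      first
        | exact hadj
        | exact hadj.symm
        | exact ⟨hadj.1.symm, hadj.2.1.symm, hadj.2.2.symm⟩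
  loopless := by
    constructor
    rintro (x | ⟨w, x, i⟩ | w) hadj <;> simp only [hConeAdj] at hadj <;>
      first
        | exact G.irrefl hadj
        | exact G.irrefl hadj.2.1
        | exact H.irrefl hadj

/-- Colorability pulls back along adjacency-preserving maps. -/
lemma colorable_of_adjMap {V V' : Type*} {G : SimpleGraph V} {G' : SimpleGraph V'}
    (f : V → V') (hf : ∀ a b, G.Adj a b → G'.Adj (f a) (f b)) {k : ℕ}
    (hc : G'.Colorable k) : G.Colorable k := by
  obtain ⟨C⟩ := hc
  exact ⟨SimpleGraph.Coloring.mk (fun v => C (f v)) fun hab => C.valid (hf _ _ hab)⟩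

/-- Folding map: the `n`-cone maps homomorphically to the `m`-cone when `1 ≤ m ≤ n`. -/
lemma cone_colorable_mono {V : Type*} (G : SimpleGraph V) {m n k : ℕ}
    (hm : 1 ≤ m) (hmn : m ≤ n) (hc : (coneGraph G m).Colorable k) :
    (coneGraph G n).Colorable k := by
  refine colorable_of_adjMap (fun a => ?_) ?_ hc
  · exact match a with
      | none => none
      | some (x, i) => some (x, ⟨(i : ℕ) - (n - m), by omega⟩)
  · rintro (_ | ⟨x, i⟩) (_ | ⟨y, j⟩) hadj <;>
      simp only [coneGraph, coneAdj] at hadj ⊢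
    · have := j.isLt; omega
    · have := i.isLt; omega
    · exact ⟨hadj.1, by have := i.isLt; have := j.isLt; omega⟩

/-- Auxiliary colour function for the `(H,h)`-cone. -/
def hConeColor {V W : Type*} (h : W → ℕ) {k : ℕ} (cG : V → Fin k) (cH : W → Fin k) :
    HConeVert V W h → Fin (k + 1)
  | .inl x => (cG x).castSucc
  | .inr (.inl ⟨w, x, i⟩) =>
      if (i : ℕ) + 2 = h w ∧ cG x = cH w then Fin.last k else (cG x).castSucc
  | .inr (.inr w) => (cH w).castSucc

lemma hConeColor_inl {V W : Type*} (h : W → ℕ) {k : ℕ} (cG : V → Fin k) (cH : W → Fin k)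
    (x : V) : hConeColor h cG cH (.inl x) = (cG x).castSucc := rfl

lemma hConeColor_mid {V W : Type*} (h : W → ℕ) {k : ℕ} (cG : V → Fin k) (cH : W → Fin k)
    (w : W) (x : V) (i : Fin (h w - 1)) :
    hConeColor h cG cH (.inr (.inl ⟨w, x, i⟩)) =
      if (i : ℕ) + 2 = h w ∧ cG x = cH w then Fin.last k else (cG x).castSucc := rfl

lemma hConeColor_apex {V W : Type*} (h : W → ℕ) {k : ℕ} (cG : V → Fin k) (cH : W → Fin k)
    (w : W) : hConeColor h cG cH (.inr (.inr w)) = (cH w).castSucc := rfl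

/-- if `n ≥ 2`, `χ(Δ_n(G)) = χ(G) + 1 > χ(H)`, `h(v) ≤ n` for some `v`
and `h(u) > 1` for all `u`, then `χ(Δ_{H,h}(G)) = χ(Δ_n(G)) = χ(G) + 1`. -/
theorem chromaticNumber_hCone {V W : Type*} [Fintype V] [Fintype W]
    (G : SimpleGraph V) (H : SimpleGraph W) (n : ℕ) (hn : 2 ≤ n)
    (hΔ : (coneGraph G n).chromaticNumber = G.chromaticNumber + 1)
    (hH : H.chromaticNumber < G.chromaticNumber + 1)
    (h : W → ℕ) (hgt1 : ∀ u, 1 < h u) (hsome : ∃ v, h v ≤ n) :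
    (hConeGraph G H h).chromaticNumber = (coneGraph G n).chromaticNumber ∧
    (coneGraph G n).chromaticNumber = G.chromaticNumber + 1 := by
  classical
  refine ⟨?_, hΔ⟩
  -- χ(G) is finite; let k be its value
  set k : ℕ := ENat.toNat G.chromaticNumber with hkdef
  have hGcol : G.Colorable k := G.colorable_chromaticNumber_of_fintype
  have hGne : G.chromaticNumber ≠ ⊤ := by
    have := G.colorable_of_fintype.chromaticNumber_le
    exact (lt_of_le_of_lt this (WithTop.coe_lt_top _)).ne
  have hk : (k : ℕ∞) = G.chromaticNumber := ENat.coe_toNat hGne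
  obtain ⟨cG⟩ := hGcol
  -- H is k-colorable
  have hHcol : H.Colorable k := by
    rw [← SimpleGraph.chromaticNumber_le_iff_colorable]
    rw [← hk] at hH
    exact (ENat.lt_add_one_iff (by simp)).mp hH
  obtain ⟨cH⟩ := hHcol
  -- Upper bound: the (H,h)-cone is (k+1)-colorable
  have upper : (hConeGraph G H h).Colorable (k + 1) := by
    refine ⟨SimpleGraph.Coloring.mk (hConeColor h cG cH) ?_⟩
    · rintro (x | ⟨w, x, i⟩ | w) (y | ⟨w', y, j⟩ | w') hadj <;>
        simp only [hConeGraph, hConeAdj] at hadj <;>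
        simp only [hConeColor_inl, hConeColor_mid, hConeColor_apex]
      · exact fun hc => cG.valid hadj (Fin.castSucc_injective _ hc)
      · split_ifs with hcase
        · exact (Fin.castSucc_lt_last (cG x)).ne
        · exact fun hc => cG.valid hadj.1 (Fin.castSucc_injective _ hc)
      · exact absurd hadj (by have := hgt1 w'; omega)
      · split_ifs with hcase
        · exact (Fin.castSucc_lt_last (cG y)).ne'
        · exact fun hc => cG.valid hadj.1.symm (Fin.castSucc_injective _ hc)
      · obtain ⟨rfl, hadj2, hij⟩ := hadj
        split_ifs with h1 h2 h2
        · exact absurd (h1.2.trans h2.2.symm) (cG.valid hadj2)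
        · exact (Fin.castSucc_lt_last (cG y)).ne'
        · exact (Fin.castSucc_lt_last (cG x)).ne
        · exact fun hc => cG.valid hadj2 (Fin.castSucc_injective _ hc)
      · obtain ⟨rfl, hi⟩ := hadj
        split_ifs with hcase
        · first
          | exact (Fin.castSucc_lt_last (cH w)).ne'
          | exact (Fin.castSucc_lt_last (cH w')).ne'
        · refine fun hc => hcase ⟨hi, ?_⟩
          exact Fin.castSucc_injective _ hc
      · exact absurd hadj (by have := hgt1 w; omega)
      · obtain ⟨rfl, hi⟩ := hadj
        split_ifs with hcase
        · first
          | exact (Fin.castSucc_lt_last (cH w)).ne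
          | exact (Fin.castSucc_lt_last (cH w')).ne
        · exact fun hc => hcase ⟨hi, (Fin.castSucc_injective _ hc.symm)⟩
      · exact fun hc => cH.valid hadj (Fin.castSucc_injective _ hc)
  -- Lower bound: χ(Δ_n(G)) ≤ χ(Δ_{H,h}(G)) via the copy Δ_{h v}(G) inside
  obtain ⟨v, hv⟩ := hsome
  have hv2 : 2 ≤ h v := hgt1 v
  have lower : (coneGraph G n).chromaticNumber ≤ (hConeGraph G H h).chromaticNumber := by
    refine SimpleGraph.chromaticNumber_le_of_forall_imp (fun m hc => ?_)
    refine cone_colorable_mono G (by omega) hv ?_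
    refine colorable_of_adjMap (fun a => ?_) ?_ hc
    · exact match a with
        | none => .inr (.inr v)
        | some (x, i) =>
            if hi : (i : ℕ) = 0 then .inl x
            else .inr (.inl ⟨v, x, ⟨(i : ℕ) - 1, by have := i.isLt; omega⟩⟩)
    · rintro (_ | ⟨x, i⟩) (_ | ⟨y, j⟩) hadj <;>
        simp only [coneGraph, coneAdj, hConeGraph] at hadj ⊢
    -- none-some
      · have hj : ¬ ((j : ℕ) = 0) := by omega
        rw [dif_neg hj]
        exact show hConeAdj G H h (.inr (.inr v)) (.inr (.inl ⟨v, y, _⟩)) from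
          ⟨rfl, by simp only; omega⟩
    -- some-none
      · have hi : ¬ ((i : ℕ) = 0) := by omega
        rw [dif_neg hi]
        exact show hConeAdj G H h (.inr (.inl ⟨v, x, _⟩)) (.inr (.inr v)) from
          ⟨rfl, by simp only; omega⟩
    -- some-some
      · obtain ⟨hGxy, hij⟩ := hadj
        by_cases hi : (i : ℕ) = 0 <;> by_cases hj : (j : ℕ) = 0
        · rw [dif_pos hi, dif_pos hj]
          exact show hConeAdj G H h (.inl x) (.inl y) from hGxy
        · rw [dif_pos hi, dif_neg hj]
          exact show hConeAdj G H h (.inl x) (.inr (.inl ⟨v, y, _⟩)) from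
            ⟨hGxy, by simp only; omega⟩
        · rw [dif_neg hi, dif_pos hj]
          exact show hConeAdj G H h (.inr (.inl ⟨v, x, _⟩)) (.inl y) from
            ⟨hGxy.symm, by simp only; omega⟩
        · rw [dif_neg hi, dif_neg hj]
          exact show hConeAdj G H h (.inr (.inl ⟨v, x, _⟩)) (.inr (.inl ⟨v, y, _⟩)) from
            ⟨rfl, hGxy, by simp only; omega⟩
  -- Combine
  have hupper : (hConeGraph G H h).chromaticNumber ≤ ((k + 1 : ℕ) : ℕ∞) :=
    SimpleGraph.chromaticNumber_le_iff_colorable.mpr upper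
  have hΔval : (coneGraph G n).chromaticNumber = ((k + 1 : ℕ) : ℕ∞) := by
    rw [hΔ, ← hk]; push_cast; ring
  refine le_antisymm ?_ (hΔval ▸ lower)
  · rw [hΔval]; exact hupper
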